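/- arXiv:solv-int/9609007 — 5 statements merged into one kernel-verified Lean document; each statement's English description precedes it below -/
import Mathlib

section
/- For every u ∈ ℂ, det T₀(u) = u²·J₂ − 2u·J₃·g₃ in P; consequently, in Q = Frac(P), det(T₀(u) + F(u)) = u²·J₂. Thus the determinant of the deformed matrix T(u) = T₀(u)+F(u) is a generating function of the Casimir J₂ only. -/
/- Context: P = ℂ[l₁,l₂,l₃,g₁,g₂,g₃] with the Lie–Poisson bracket of e(3). -/

noncomputable section
open MvPolynomial Matrix Complex
open scoped Kronecker

abbrev Pring : Type := MvPolynomial (Fin 6) ℂ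

def l1 : Pring := X 0
def l2 : Pring := X 1
def l3 : Pring := X 2
def g1 : Pring := X 3
def g2 : Pring := X 4
def g3 : Pring := X 5

def lplus : Pring := l1 + C I * l2
def lminus : Pring := l1 - C I * l2
def gplus : Pring := g1 + C I * g2
def gminus : Pring := g1 - C I * g2

def J2 : Pring := g1 ^ 2 + g2 ^ 2 + g3 ^ 2
def J3 : Pring := l1 * g1 + l2 * g2 + l3 * g3

/-- Structure matrix of the e(3) Lie–Poisson bracket: the entry `Smat i j` is the
bracket of the `i`-th and `j`-th generators, `{l_i,l_j} = ε_{ijk} l_k`,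
`{l_i,g_j} = ε_{ijk} g_k`, `{g_i,g_j} = 0`. -/
def Smat : Fin 6 → Fin 6 → Pring :=
  ![![0,  l3, -l2,  0,  g3, -g2],
    ![-l3, 0,  l1, -g3, 0,  g1],
    ![l2, -l1, 0,  g2, -g1, 0],
    ![0,  g3, -g2,  0,  0,  0],
    ![-g3, 0,  g1,  0,  0,  0],
    ![g2, -g1, 0,  0,  0,  0]]

/-- The Lie–Poisson bracket of e(3) on `P`: the unique antisymmetric ℂ-bilinear
biderivation with the prescribed values on generators, given by the explicit
formula `{f,h} = ∑_{i,j} {x_i,x_j} ∂f/∂x_i ∂h/∂x_j`. -/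
def pb (f h : Pring) : Pring :=
  ∑ i : Fin 6, ∑ j : Fin 6, Smat i j * pderiv i f * pderiv j h

/-- The 2×2 monodromy matrix `T₀(u)` of the axially symmetric Neumann system. -/
def T0 (u : ℂ) : Matrix (Fin 2) (Fin 2) Pring :=
  !![C u ^ 2 - C (2 * u) * l3 - l1 ^ 2 - l2 ^ 2, C I * (C u * gplus - g3 * lplus);
     C I * (C u * gminus - g3 * lminus), g3 ^ 2]

/-- `Q = Frac(P)`, the fraction field of `P`. -/
abbrev Qfield : Type := FractionRing Pring

/-- The canonical embedding `P → Q`. -/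
def ι (f : Pring) : Qfield := algebraMap Pring Qfield f

/-- `T₀(u)` viewed over `Q`. -/
def T0Q (u : ℂ) : Matrix (Fin 2) (Fin 2) Qfield :=
  (T0 u).map (algebraMap Pring Qfield)

/-- `F(u) = (2u·J₃/g₃)·E₁₁` over `Q`. -/
def FQ (u : ℂ) : Matrix (Fin 2) (Fin 2) Qfield :=
  !![ι (C (2 * u) * J3) / ι g3, 0; 0, 0]

/-- The deformed matrix `T(u) = T₀(u) + F(u)`. -/
def TQ (u : ℂ) : Matrix (Fin 2) (Fin 2) Qfield := T0Q u + FQ u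

/-- Permutation matrix `P₁₂` on ℂ²⊗ℂ², over `Q`. -/
def PmatQ : Matrix (Fin 2 × Fin 2) (Fin 2 × Fin 2) Qfield :=
  Matrix.of fun p q => if p.1 = q.2 ∧ p.2 = q.1 then 1 else 0

/-- Classical rational r-matrix `r(w) = (2i/w)·P₁₂` over `Q`. -/
def rQ (w : ℂ) : Matrix (Fin 2 × Fin 2) (Fin 2 × Fin 2) Qfield :=
  ι (C (2 * I / w)) • PmatQ

set_option maxHeartbeats 1000000 in
/-- `det T₀(u) = u²·J₂ − 2u·J₃·g₃` in `P`, and consequently over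
`Q = Frac(P)` the deformed matrix `T(u) = T₀(u) + F(u)` has `det(T₀(u)+F(u)) = u²·J₂`. -/
theorem statement3 (u : ℂ) :
    (T0 u).det = C u ^ 2 * J2 - C (2 * u) * J3 * g3 ∧
    (T0Q u + FQ u).det = ι (C u ^ 2 * J2) := by
  have hI : (C I : Pring) ^ 2 = -1 := by
    rw [← C_pow, Complex.I_sq, map_neg, _root_.map_one]
  have h1 : (T0 u).det = C u ^ 2 * J2 - C (2 * u) * J3 * g3 := by
    simp only [T0, Matrix.det_fin_two_of, J2, J3, gplus, gminus, lplus, lminus,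
      _root_.map_mul, map_ofNat]
    linear_combination (-(C u * g1 - g3 * l1) ^ 2 +
      ((C I : Pring) ^ 2 - 1) * (C u * g2 - g3 * l2) ^ 2) * hI
  refine ⟨h1, ?_⟩
  have hg : ι g3 ≠ 0 := by
    have : (g3 : Pring) ≠ 0 := by
      simp [g3, MvPolynomial.X_ne_zero]
    simpa [ι] using
      fun h => this ((IsFractionRing.injective Pring Qfield) (by simpa using h))
  have hdet : (T0Q u + FQ u).det =
      ι ((T0 u).det) + ι (C (2 * u) * J3) / ι g3 * ι (g3 ^ 2) := by
    rw [Matrix.det_fin_two, Matrix.det_fin_two]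
    simp [T0Q, FQ, T0, ι, Matrix.add_apply]
    ring
  rw [hdet, h1]
  have e2 : ι (g3 ^ 2) = ι g3 * ι g3 := by simp [ι, _root_.map_pow, sq]
  have e : ι (C (2 * u) * J3) / ι g3 * ι (g3 ^ 2) = ι (C (2 * u) * J3) * ι g3 := by
    rw [e2, div_mul_eq_mul_div, mul_div_assoc, mul_div_cancel_left₀ _ hg]
  rw [e]
  simp only [ι, _root_.map_sub, _root_.map_mul]
  ring
end
end

section
/- The Kowalewski monodromy matrix has the reflection-equation symmetry T₋ⁱ(u) = T₋(u), i.e. σ₂·T₋(−u)ᵗ·σ₂ = T₋(u) for all u ∈ ℂ. -/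
/- Context: P = ℂ[l₁,l₂,l₃,g₁,g₂,g₃] with the Lie–Poisson bracket of e(3). -/

noncomputable section
open MvPolynomial Matrix Complex
open scoped Kronecker

/-- `k₋ = l₋² + 2iα₁g₋`. -/
def kminus (α1 : ℂ) : Pring := lminus ^ 2 + C (2 * I * α1) * gminus

/-- `k₊ = l₊² + 2iα₂g₊`. -/
def kplus (α2 : ℂ) : Pring := lplus ^ 2 + C (2 * I * α2) * gplus

/-- `σ₂`, the second Pauli matrix, viewed over `P`. -/
def sigma2 : Matrix (Fin 2) (Fin 2) Pring := !![0, -(C I); C I, 0]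

/-- `T₀ⁱ(u) = σ₂·T₀(−u)ᵗ·σ₂`. -/
def T0i (u : ℂ) : Matrix (Fin 2) (Fin 2) Pring := sigma2 * (T0 (-u)).transpose * sigma2

/-- Boundary matrix `K₋(u) = [[α₁, u],[0, α₁]]`. -/
def Km (α1 : ℂ) (u : ℂ) : Matrix (Fin 2) (Fin 2) Pring := !![C α1, C u; 0, C α1]

/-- Boundary matrix `K₊(u) = [[−α₂, 0],[−u, −α₂]]`. -/
def Kp (α2 : ℂ) (u : ℂ) : Matrix (Fin 2) (Fin 2) Pring := !![-(C α2), 0; -(C u), -(C α2)]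

/-- The Kowalewski monodromy matrix
`T₋(u) = T₀(u)·K₋(u)·T₀ⁱ(u) + u·J₃·[[i l₋ u + α₁ g₃, 2iα₁ l₊],[0, i l₋ u − α₁ g₃]]`. -/
def Tm (α1 : ℂ) (u : ℂ) : Matrix (Fin 2) (Fin 2) Pring :=
  T0 u * Km α1 u * T0i u
    + (C u * J3) • !![C I * lminus * C u + C α1 * g3, C (2 * I * α1) * lplus;
                      0, C I * lminus * C u - C α1 * g3]

def Rm (α1 : ℂ) (u : ℂ) : Matrix (Fin 2) (Fin 2) Pring :=
  !![C I * lminus * C u + C α1 * g3, C (2 * I * α1) * lplus;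
     0, C I * lminus * C u - C α1 * g3]

lemma CI_sq : (C I : Pring) * C I = -1 := by
  rw [← _root_.map_mul, Complex.I_mul_I]; simp

lemma CI_sq' : (C I : Pring) ^ 2 = -1 := by
  rw [sq, CI_sq]

lemma CI_cube : (C I : Pring) ^ 3 = -(C I) := by
  rw [pow_succ, CI_sq']; ring

lemma sigma2_sq : sigma2 * sigma2 = 1 := by
  refine Matrix.ext fun i j => ?_
  fin_cases i <;> fin_cases j <;>
    simp [sigma2, Matrix.mul_apply, Fin.sum_univ_two, Matrix.one_apply, CI_sq]

def iota (M : Matrix (Fin 2) (Fin 2) Pring) : Matrix (Fin 2) (Fin 2) Pring :=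
  sigma2 * M.transpose * sigma2

lemma iota_mul (A B : Matrix (Fin 2) (Fin 2) Pring) :
    iota (A * B) = iota B * iota A := by
  simp only [iota, Matrix.transpose_mul]
  calc sigma2 * (B.transpose * A.transpose) * sigma2
      = (sigma2 * B.transpose * sigma2) * (sigma2 * A.transpose * sigma2) := by
        rw [show (sigma2 * B.transpose * sigma2) * (sigma2 * A.transpose * sigma2)
            = sigma2 * B.transpose * (sigma2 * sigma2) * A.transpose * sigma2 by
          simp [Matrix.mul_assoc], sigma2_sq]
        simp [Matrix.mul_assoc]

lemma entry_lemma (A B : Matrix (Fin 2) (Fin 2) Pring)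
    (h00 : (sigma2 * A.transpose * sigma2) 0 0 = B 0 0)
    (h01 : (sigma2 * A.transpose * sigma2) 0 1 = B 0 1)
    (h10 : (sigma2 * A.transpose * sigma2) 1 0 = B 1 0)
    (h11 : (sigma2 * A.transpose * sigma2) 1 1 = B 1 1) :
    iota A = B := by
  refine Matrix.ext fun i j => ?_
  fin_cases i <;> fin_cases j
  exacts [h00, h01, h10, h11]

lemma iota_entry (A : Matrix (Fin 2) (Fin 2) Pring) (i j : Fin 2) :
    (sigma2 * A.transpose * sigma2) i j =
      sigma2 i 0 * (A 0 0 * sigma2 0 j + A 1 0 * sigma2 1 j)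
      + sigma2 i 1 * (A 0 1 * sigma2 0 j + A 1 1 * sigma2 1 j) := by
  simp [Matrix.mul_apply, Fin.sum_univ_two, Matrix.transpose_apply]; ring

lemma sigma2_transpose : sigma2.transpose = -sigma2 := by
  refine Matrix.ext fun i j => ?_
  fin_cases i <;> fin_cases j <;> simp [sigma2]

lemma iota_iota (A : Matrix (Fin 2) (Fin 2) Pring) : iota (iota A) = A := by
  simp only [iota, Matrix.transpose_mul, Matrix.transpose_transpose, sigma2_transpose]
  simp only [Matrix.neg_mul, Matrix.mul_neg, neg_neg, Matrix.mul_assoc]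
  rw [show sigma2 * (sigma2 * (A * (sigma2 * sigma2))) = sigma2 * sigma2 * (A * (sigma2 * sigma2)) by
    simp [Matrix.mul_assoc], sigma2_sq]
  simp

lemma iota_T0i (u : ℂ) : iota (T0i (-u)) = T0 u := by
  have : T0i (-u) = iota (T0 u) := by rw [T0i, neg_neg]; rfl
  rw [this, iota_iota]

lemma iota_Km (α1 u : ℂ) : iota (Km α1 (-u)) = Km α1 u := by
  apply entry_lemma <;>
  · rw [iota_entry]
    simp [Km, sigma2, map_neg]
    try ring_nf
    try simp only [CI_cube, CI_sq', CI_sq, mul_neg, neg_neg, mul_one, neg_mul]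
    try ring

lemma iota_Rm (α1 u : ℂ) : iota (Rm α1 (-u)) = -(Rm α1 u) := by
  apply entry_lemma <;>
  · rw [iota_entry]
    simp [Rm, sigma2, map_neg]
    try ring_nf
    try simp only [CI_cube, CI_sq', CI_sq, mul_neg, neg_neg, mul_one, neg_mul]
    try ring

set_option maxHeartbeats 4000000 in
/-- the Kowalewski monodromy matrix has the reflection-equation symmetry
`T₋ⁱ(u) = σ₂·T₋(−u)ᵗ·σ₂ = T₋(u)` for all `u ∈ ℂ`. -/
theorem statement9 (α1 : ℂ) (u : ℂ) :
    sigma2 * (Tm α1 (-u)).transpose * sigma2 = Tm α1 u := by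
  have h : Tm α1 (-u) = T0 (-u) * Km α1 (-u) * T0i (-u) + (C (-u) * J3) • Rm α1 (-u) := rfl
  show iota (Tm α1 (-u)) = Tm α1 u
  rw [h]
  have hadd : iota (T0 (-u) * Km α1 (-u) * T0i (-u) + (C (-u) * J3) • Rm α1 (-u))
      = iota (T0 (-u) * Km α1 (-u) * T0i (-u)) + (C (-u) * J3) • iota (Rm α1 (-u)) := by
    simp [iota, Matrix.transpose_add, Matrix.transpose_smul, Matrix.add_mul,
      Matrix.mul_add, Matrix.smul_mul, Matrix.mul_smul]
  rw [hadd, iota_mul, iota_mul, iota_T0i, iota_Km, iota_Rm]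
  have hT0 : iota (T0 (-u)) = T0i u := rfl
  rw [hT0]
  have : (C (-u) * J3) • (-(Rm α1 u)) = (C u * J3) • Rm α1 u := by
    simp [smul_smul]
  rw [this]
  show _ = Tm α1 u
  rw [Tm, Matrix.mul_assoc]
  rfl
end
end

section
/- For all α₁, α₂ ∈ ℂ, the integrals of the generalized Kowalewski top are in involution: {J₁, J₄} = 0 in P, where J₁ = l₊l₋ + 2l₃² − i(α₁g₊ + α₂g₋) and J₄ = (l₊² + 2iα₂g₊)·(l₋² + 2iα₁g₋). (Together with the Casimir functions J₂ = (g,g) and J₃ = (l,g), this makes the Kowalewski top completely integrable on e(3)*.) -/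
/- Context: P = ℂ[l₁,l₂,l₃,g₁,g₂,g₃] with the Lie–Poisson bracket of e(3). -/

noncomputable section
open MvPolynomial Matrix Complex
open scoped Kronecker

set_option maxHeartbeats 4000000 in
/-- the integrals of the generalized Kowalewski top are in involution:
`{J₁, J₄} = 0` in `P`, where `J₁ = l₊l₋ + 2l₃² − i(α₁g₊ + α₂g₋)` and
`J₄ = (l₊² + 2iα₂g₊)(l₋² + 2iα₁g₋)`. -/
theorem statement13 (α1 α2 : ℂ) :
    pb (lplus * lminus + 2 * l3 ^ 2 - C I * (C α1 * gplus + C α2 * gminus))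
       ((lplus ^ 2 + C (2 * I * α2) * gplus) * (lminus ^ 2 + C (2 * I * α1) * gminus))
      = 0 := by
  have hII : (C I * C I : Pring) = -1 := by
    rw [← C_mul, Complex.I_mul_I]; simp
  have hI2 : (C I ^ 2 : Pring) = -1 := by rw [sq, hII]
  have hI3 : (C I ^ 3 : Pring) = -C I := by rw [pow_succ, hI2]; ring
  have hI4 : (C I ^ 4 : Pring) = 1 := by rw [pow_succ, hI3]; rw [neg_mul, hII]; ring
  have hI5 : (C I ^ 5 : Pring) = C I := by rw [pow_succ, hI4, one_mul]
  have pdX : ∀ (i j : Fin 6), pderiv i (X j : Pring) = if i = j then 1 else 0 := by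
    intro i j
    rw [pderiv_X]
    by_cases h : i = j <;> simp [h, Pi.single_apply]
  have hpd2 : ∀ i : Fin 6, pderiv i (2 : Pring) = 0 := by
    intro i; rw [(map_ofNat C 2).symm]; simp
  set f : Pring := lplus * lminus + 2 * l3 ^ 2 - C I * (C α1 * gplus + C α2 * gminus) with hf
  set A : Pring := lplus ^ 2 + C (2 * I * α2) * gplus with hA
  set B : Pring := lminus ^ 2 + C (2 * I * α1) * gminus with hB
  have hf0 : pderiv 0 f = 2 * X 0 := by
    simp [hf, lplus, lminus, gplus, gminus, l1, l2, l3, g1, g2, g3, pdX, hpd2]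
    try ring
    try exact Or.inl (map_ofNat C 2)
  have hf1 : pderiv 1 f = 2 * X 1 := by
    simp [hf, lplus, lminus, gplus, gminus, l1, l2, l3, g1, g2, g3, pdX, hpd2]
    ring_nf
    simp only [hI2, hII, hI3, hI4, hI5, Matrix.vecHead, Matrix.vecTail, Function.comp_apply]
    ring
  have hf2 : pderiv 2 f = 4 * X 2 := by
    simp [hf, lplus, lminus, gplus, gminus, l1, l2, l3, g1, g2, g3, pdX, hpd2]
    try ring
    try exact Or.inl (map_ofNat C 2)
  have hf3 : pderiv 3 f = -(C I * (C α1 + C α2)) := by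
    simp [hf, lplus, lminus, gplus, gminus, l1, l2, l3, g1, g2, g3, pdX, hpd2]
    try ring
    try exact Or.inl (map_ofNat C 2)
  have hf4 : pderiv 4 f = C α1 - C α2 := by
    simp [hf, lplus, lminus, gplus, gminus, l1, l2, l3, g1, g2, g3, pdX, hpd2]
    ring_nf
    simp only [hI2, hII, hI3, hI4, hI5, Matrix.vecHead, Matrix.vecTail, Function.comp_apply]
    ring
  have hf5 : pderiv 5 f = 0 := by
    simp [hf, lplus, lminus, gplus, gminus, l1, l2, l3, g1, g2, g3, pdX, hpd2]
  have hA0 : pderiv 0 A = 2 * lplus := by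
    simp [hA, lplus, gplus, l1, l2, g1, g2, pdX, hpd2]; try ring; try exact Or.inl (map_ofNat C 2)
  have hA1 : pderiv 1 A = 2 * C I * lplus := by
    simp [hA, lplus, gplus, l1, l2, g1, g2, pdX, hpd2]; try ring; try exact Or.inl (map_ofNat C 2)
  have hA2 : pderiv 2 A = 0 := by simp [hA, lplus, gplus, l1, l2, g1, g2, pdX, hpd2]
  have hA3 : pderiv 3 A = 2 * C I * C α2 := by
    simp [hA, lplus, gplus, l1, l2, g1, g2, pdX, hpd2]; try ring; try exact Or.inl (map_ofNat C 2)
  have hA4 : pderiv 4 A = 2 * C I * C α2 * C I := by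
    simp [hA, lplus, gplus, l1, l2, g1, g2, pdX, hpd2]; try ring; try exact Or.inl (map_ofNat C 2)
  have hA5 : pderiv 5 A = 0 := by simp [hA, lplus, gplus, l1, l2, g1, g2, pdX, hpd2]
  have hB0 : pderiv 0 B = 2 * lminus := by
    simp [hB, lminus, gminus, l1, l2, g1, g2, pdX, hpd2]; try ring; try exact Or.inl (map_ofNat C 2)
  have hB1 : pderiv 1 B = -(2 * C I * lminus) := by
    simp [hB, lminus, gminus, l1, l2, g1, g2, pdX, hpd2]; try ring; try exact Or.inl (map_ofNat C 2)
  have hB2 : pderiv 2 B = 0 := by simp [hB, lminus, gminus, l1, l2, g1, g2, pdX, hpd2]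
  have hB3 : pderiv 3 B = 2 * C I * C α1 := by
    simp [hB, lminus, gminus, l1, l2, g1, g2, pdX, hpd2]; try ring; try exact Or.inl (map_ofNat C 2)
  have hB4 : pderiv 4 B = -(2 * C I * C α1 * C I) := by
    simp [hB, lminus, gminus, l1, l2, g1, g2, pdX, hpd2]; try ring; try exact Or.inl (map_ofNat C 2)
  have hB5 : pderiv 5 B = 0 := by simp [hB, lminus, gminus, l1, l2, g1, g2, pdX, hpd2]
  have hdh : ∀ j : Fin 6, pderiv j (A * B) = pderiv j A * B + A * pderiv j B := by
    intro j; rw [pderiv_mul]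
  simp only [pb, Fin.sum_univ_six, hdh, hf0, hf1, hf2, hf3, hf4, hf5,
    hA0, hA1, hA2, hA3, hA4, hA5, hB0, hB1, hB2, hB3, hB4, hB5]
  simp only [Smat, Matrix.cons_val]
  norm_num [Smat, Matrix.cons_val_succ]
  simp only [hA, hB, lplus, lminus, gplus, gminus, l1, l2, l3, g1, g2, g3, _root_.map_mul, map_ofNat]
  ring_nf
  simp only [hI2, hII, hI3, hI4, hI5, Matrix.vecHead, Matrix.vecTail, Function.comp_apply]
  ring_nf
  try simp only [hI2, hII, hI3, hI4, hI5, Matrix.vecHead, Matrix.vecTail, Function.comp_apply]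
  try ring
end
end

section
/- For all α₁, α₂, γ ∈ ℂ, the integrals of the Kowalewski gyrostat are in involution: {J₁, J₄} = 0 in P, where J₁ = l₊l₋ + 2l₃² + 2γl₃ − i(α₁g₊ + α₂g₋) and J₄ = k₊k₋ − 4γ(l₃ + γ)l₊l₋ − 4iγ·g₃·(α₁l₊ + α₂l₋), with k₊ = l₊² + 2iα₂g₊ and k₋ = l₋² + 2iα₁g₋. -/
/- Context: P = ℂ[l₁,l₂,l₃,g₁,g₂,g₃] with the Lie–Poisson bracket of e(3). -/

noncomputable section
open MvPolynomial Matrix Complex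
open scoped Kronecker

lemma pb_add_right (f a b : Pring) : pb f (a + b) = pb f a + pb f b := by
  simp [pb, mul_add, Finset.sum_add_distrib]

lemma pb_sub_right (f a b : Pring) : pb f (a - b) = pb f a - pb f b := by
  simp [pb, mul_sub, Finset.sum_sub_distrib]

lemma pb_mul_right (f a b : Pring) : pb f (a * b) = pb f a * b + a * pb f b := by
  simp only [pb, pderiv_mul, mul_add, Finset.sum_add_distrib, Finset.sum_mul, Finset.mul_sum]
  refine congrArg₂ (· + ·) ?_ ?_ <;> (apply Finset.sum_congr rfl; intros; apply Finset.sum_congr rfl; intros; ring)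

lemma pb_C_right (f : Pring) (c : ℂ) : pb f (C c) = 0 := by
  simp [pb]

lemma pbX (f : Pring) (j : Fin 6) : pb f (X j) = ∑ i : Fin 6, Smat i j * pderiv i f := by
  simp only [pb]
  refine Finset.sum_congr rfl fun i _ => ?_
  rw [Finset.sum_eq_single j]
  · simp
  · intro b _ hb; simp [pderiv_X, Pi.single_apply, hb]
  · simp

lemma pderiv_two (i : Fin 6) : pderiv i (2 : Pring) = 0 := by
  rw [show (2 : Pring) = C 2 by rw [map_ofNat], pderiv_C]

lemma smat00 : Smat 0 0 = 0 := rfl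
lemma smat01 : Smat 0 1 = l3 := rfl
lemma smat02 : Smat 0 2 = -l2 := rfl
lemma smat03 : Smat 0 3 = 0 := rfl
lemma smat04 : Smat 0 4 = g3 := rfl
lemma smat05 : Smat 0 5 = -g2 := rfl
lemma smat10 : Smat 1 0 = -l3 := rfl
lemma smat11 : Smat 1 1 = 0 := rfl
lemma smat12 : Smat 1 2 = l1 := rfl
lemma smat13 : Smat 1 3 = -g3 := rfl
lemma smat14 : Smat 1 4 = 0 := rfl
lemma smat15 : Smat 1 5 = g1 := rfl
lemma smat20 : Smat 2 0 = l2 := rfl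
lemma smat21 : Smat 2 1 = -l1 := rfl
lemma smat22 : Smat 2 2 = 0 := rfl
lemma smat23 : Smat 2 3 = g2 := rfl
lemma smat24 : Smat 2 4 = -g1 := rfl
lemma smat25 : Smat 2 5 = 0 := rfl
lemma smat30 : Smat 3 0 = 0 := rfl
lemma smat31 : Smat 3 1 = g3 := rfl
lemma smat32 : Smat 3 2 = -g2 := rfl
lemma smat33 : Smat 3 3 = 0 := rfl
lemma smat34 : Smat 3 4 = 0 := rfl
lemma smat35 : Smat 3 5 = 0 := rfl
lemma smat40 : Smat 4 0 = -g3 := rfl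
lemma smat41 : Smat 4 1 = 0 := rfl
lemma smat42 : Smat 4 2 = g1 := rfl
lemma smat43 : Smat 4 3 = 0 := rfl
lemma smat44 : Smat 4 4 = 0 := rfl
lemma smat45 : Smat 4 5 = 0 := rfl
lemma smat50 : Smat 5 0 = g2 := rfl
lemma smat51 : Smat 5 1 = -g1 := rfl
lemma smat52 : Smat 5 2 = 0 := rfl
lemma smat53 : Smat 5 3 = 0 := rfl
lemma smat54 : Smat 5 4 = 0 := rfl
lemma smat55 : Smat 5 5 = 0 := rfl

set_option maxHeartbeats 1600000 in
set_option maxRecDepth 10000 in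
/-- the integrals of the Kowalewski gyrostat are in involution:
`{J₁, J₄} = 0` in `P`, where `J₁ = l₊l₋ + 2l₃² + 2γl₃ − i(α₁g₊ + α₂g₋)` and
`J₄ = k₊k₋ − 4γ(l₃+γ)l₊l₋ − 4iγ g₃(α₁l₊ + α₂l₋)`, with `k₊ = l₊² + 2iα₂g₊`,
`k₋ = l₋² + 2iα₁g₋`. -/
theorem statement14 (α1 α2 γ : ℂ) :
    pb (lplus * lminus + 2 * l3 ^ 2 + C (2 * γ) * l3
          - C I * (C α1 * gplus + C α2 * gminus))
       ((lplus ^ 2 + C (2 * I * α2) * gplus) * (lminus ^ 2 + C (2 * I * α1) * gminus)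
          - C (4 * γ) * (l3 + C γ) * lplus * lminus
          - C (4 * I * γ) * g3 * (C α1 * lplus + C α2 * lminus))
      = 0 := by
  have hI : (C I : Pring)^2 = -1 := by
    rw [← map_pow, Complex.I_sq, map_neg, _root_.map_one]
  have e_lp : pb (lplus * lminus + 2 * (l3 * l3) + C (2 * γ) * l3 - C I * (C α1 * gplus + C α2 * gminus)) (lplus) = (2:Pring) * (g3) * (C α2) + (2:Pring) * (l2) * (C γ) + (2:Pring) * (l2) * (l3) + (-2:Pring) * (l1) * (C I) * (C γ) + (-2:Pring) * (l1) * (l3) * (C I) := by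
    simp only [lplus, lminus, gplus, gminus, l1, l2, l3, g1, g2, g3]
    simp only [pb_mul_right, pb_add_right, pb_sub_right, pb_C_right, pbX]
    simp (config := { maxSteps := 1000000 }) only [Fin.sum_univ_six,
      smat00, smat01, smat02, smat03, smat04, smat05, smat10, smat11, smat12, smat13, smat14, smat15, smat20, smat21, smat22, smat23, smat24, smat25, smat30, smat31, smat32, smat33, smat34, smat35, smat40, smat41, smat42, smat43, smat44, smat45, smat50, smat51, smat52, smat53, smat54, smat55, l1, l2, l3, g1, g2, g3,
      map_add, map_sub, pderiv_mul, pderiv_C, pderiv_two, pderiv_X, Pi.single_apply,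
      Fin.reduceEq, reduceIte, neg_zero,
      mul_one, mul_zero, zero_mul, one_mul, add_zero, zero_add, sub_zero, neg_mul, mul_neg]
    try simp only [_root_.map_mul, map_ofNat]
    linear_combination ((-2:Pring) * (X 5) * (C α2) + (2:Pring) * (X 1) * (X 2)) * hI
  have e_lm : pb (lplus * lminus + 2 * (l3 * l3) + C (2 * γ) * l3 - C I * (C α1 * gplus + C α2 * gminus)) (lminus) = (-2:Pring) * (g3) * (C α1) + (2:Pring) * (l2) * (C γ) + (2:Pring) * (l2) * (l3) + (2:Pring) * (l1) * (C I) * (C γ) + (2:Pring) * (l1) * (l3) * (C I) := by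
    simp only [lplus, lminus, gplus, gminus, l1, l2, l3, g1, g2, g3]
    simp only [pb_mul_right, pb_add_right, pb_sub_right, pb_C_right, pbX]
    simp (config := { maxSteps := 1000000 }) only [Fin.sum_univ_six,
      smat00, smat01, smat02, smat03, smat04, smat05, smat10, smat11, smat12, smat13, smat14, smat15, smat20, smat21, smat22, smat23, smat24, smat25, smat30, smat31, smat32, smat33, smat34, smat35, smat40, smat41, smat42, smat43, smat44, smat45, smat50, smat51, smat52, smat53, smat54, smat55, l1, l2, l3, g1, g2, g3,
      map_add, map_sub, pderiv_mul, pderiv_C, pderiv_two, pderiv_X, Pi.single_apply,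
      Fin.reduceEq, reduceIte, neg_zero,
      mul_one, mul_zero, zero_mul, one_mul, add_zero, zero_add, sub_zero, neg_mul, mul_neg]
    try simp only [_root_.map_mul, map_ofNat]
    linear_combination ((2:Pring) * (X 5) * (C α1) + (2:Pring) * (X 1) * (X 2)) * hI
  have e_gp : pb (lplus * lminus + 2 * (l3 * l3) + C (2 * γ) * l3 - C I * (C α1 * gplus + C α2 * gminus)) (gplus) = (2:Pring) * (g2) * (C γ) + (-2:Pring) * (g1) * (C I) * (C γ) + (4:Pring) * (l3) * (g2) + (-4:Pring) * (l3) * (g1) * (C I) + (-2:Pring) * (l2) * (g3) + (2:Pring) * (l1) * (g3) * (C I) := by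
    simp only [lplus, lminus, gplus, gminus, l1, l2, l3, g1, g2, g3]
    simp only [pb_mul_right, pb_add_right, pb_sub_right, pb_C_right, pbX]
    simp (config := { maxSteps := 1000000 }) only [Fin.sum_univ_six,
      smat00, smat01, smat02, smat03, smat04, smat05, smat10, smat11, smat12, smat13, smat14, smat15, smat20, smat21, smat22, smat23, smat24, smat25, smat30, smat31, smat32, smat33, smat34, smat35, smat40, smat41, smat42, smat43, smat44, smat45, smat50, smat51, smat52, smat53, smat54, smat55, l1, l2, l3, g1, g2, g3,
      map_add, map_sub, pderiv_mul, pderiv_C, pderiv_two, pderiv_X, Pi.single_apply,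
      Fin.reduceEq, reduceIte, neg_zero,
      mul_one, mul_zero, zero_mul, one_mul, add_zero, zero_add, sub_zero, neg_mul, mul_neg]
    try simp only [_root_.map_mul, map_ofNat]
    linear_combination ((2:Pring) * (X 1) * (X 5)) * hI
  have e_gm : pb (lplus * lminus + 2 * (l3 * l3) + C (2 * γ) * l3 - C I * (C α1 * gplus + C α2 * gminus)) (gminus) = (2:Pring) * (g2) * (C γ) + (2:Pring) * (g1) * (C I) * (C γ) + (4:Pring) * (l3) * (g2) + (4:Pring) * (l3) * (g1) * (C I) + (-2:Pring) * (l2) * (g3) + (-2:Pring) * (l1) * (g3) * (C I) := by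
    simp only [lplus, lminus, gplus, gminus, l1, l2, l3, g1, g2, g3]
    simp only [pb_mul_right, pb_add_right, pb_sub_right, pb_C_right, pbX]
    simp (config := { maxSteps := 1000000 }) only [Fin.sum_univ_six,
      smat00, smat01, smat02, smat03, smat04, smat05, smat10, smat11, smat12, smat13, smat14, smat15, smat20, smat21, smat22, smat23, smat24, smat25, smat30, smat31, smat32, smat33, smat34, smat35, smat40, smat41, smat42, smat43, smat44, smat45, smat50, smat51, smat52, smat53, smat54, smat55, l1, l2, l3, g1, g2, g3,
      map_add, map_sub, pderiv_mul, pderiv_C, pderiv_two, pderiv_X, Pi.single_apply,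
      Fin.reduceEq, reduceIte, neg_zero,
      mul_one, mul_zero, zero_mul, one_mul, add_zero, zero_add, sub_zero, neg_mul, mul_neg]
    try simp only [_root_.map_mul, map_ofNat]
    linear_combination ((2:Pring) * (X 1) * (X 5)) * hI
  have e_l3v : pb (lplus * lminus + 2 * (l3 * l3) + C (2 * γ) * l3 - C I * (C α1 * gplus + C α2 * gminus)) (l3) = (1:Pring) * (g2) * (C I) * (C α2) + (1:Pring) * (g2) * (C I) * (C α1) + (-1:Pring) * (g1) * (C α2) + (1:Pring) * (g1) * (C α1) := by
    simp only [lplus, lminus, gplus, gminus, l1, l2, l3, g1, g2, g3]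
    simp only [pb_mul_right, pb_add_right, pb_sub_right, pb_C_right, pbX]
    simp (config := { maxSteps := 1000000 }) only [Fin.sum_univ_six,
      smat00, smat01, smat02, smat03, smat04, smat05, smat10, smat11, smat12, smat13, smat14, smat15, smat20, smat21, smat22, smat23, smat24, smat25, smat30, smat31, smat32, smat33, smat34, smat35, smat40, smat41, smat42, smat43, smat44, smat45, smat50, smat51, smat52, smat53, smat54, smat55, l1, l2, l3, g1, g2, g3,
      map_add, map_sub, pderiv_mul, pderiv_C, pderiv_two, pderiv_X, Pi.single_apply,
      Fin.reduceEq, reduceIte, neg_zero,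
      mul_one, mul_zero, zero_mul, one_mul, add_zero, zero_add, sub_zero, neg_mul, mul_neg]
    try simp only [_root_.map_mul, map_ofNat]
    linear_combination ((1:Pring) * (X 3) * (C α2) + (-1:Pring) * (X 3) * (C α1) + (-2:Pring) * (X 0) * (X 1)) * hI
  have e_g3v : pb (lplus * lminus + 2 * (l3 * l3) + C (2 * γ) * l3 - C I * (C α1 * gplus + C α2 * gminus)) (g3) = (2:Pring) * (l2) * (g1) + (-2:Pring) * (l1) * (g2) := by
    simp only [lplus, lminus, gplus, gminus, l1, l2, l3, g1, g2, g3]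
    simp only [pb_mul_right, pb_add_right, pb_sub_right, pb_C_right, pbX]
    simp (config := { maxSteps := 1000000 }) only [Fin.sum_univ_six,
      smat00, smat01, smat02, smat03, smat04, smat05, smat10, smat11, smat12, smat13, smat14, smat15, smat20, smat21, smat22, smat23, smat24, smat25, smat30, smat31, smat32, smat33, smat34, smat35, smat40, smat41, smat42, smat43, smat44, smat45, smat50, smat51, smat52, smat53, smat54, smat55, l1, l2, l3, g1, g2, g3,
      map_add, map_sub, pderiv_mul, pderiv_C, pderiv_two, pderiv_X, Pi.single_apply,
      Fin.reduceEq, reduceIte, neg_zero,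
      mul_one, mul_zero, zero_mul, one_mul, add_zero, zero_add, sub_zero, neg_mul, mul_neg]
    try simp only [_root_.map_mul, map_ofNat]
    linear_combination ((-2:Pring) * (X 1) * (X 3)) * hI
  simp only [pow_two, pb_mul_right, pb_add_right, pb_sub_right, pb_C_right,
    e_lp, e_lm, e_gp, e_gm, e_l3v, e_g3v]
  simp only [lplus, lminus, gplus, gminus, _root_.map_mul, map_ofNat]
  linear_combination ((16:Pring) * (g1) * (g2) * (C I)^2 * (C α1) * (C α2) * (C γ) + (32:Pring) * (l3) * (g1) * (g2) * (C I)^2 * (C α1) * (C α2) + (-4:Pring) * (l2)^2 * (g1) * (C I)^2 * (C α2) * (C γ) + (4:Pring) * (l2)^2 * (g1) * (C I)^2 * (C α1) * (C γ) + (-8:Pring) * (l2)^2 * (l3) * (g1) * (C I)^2 * (C α2) + (8:Pring) * (l2)^2 * (l3) * (g1) * (C I)^2 * (C α1) + (-8:Pring) * (l1) * (g3) * (C α2) * (C γ)^2 + (8:Pring) * (l1) * (g3) * (C α1) * (C γ)^2 + (-16:Pring) * (l1) * (g2) * (g3) * (C I)^2 * (C α1) * (C α2) + (-8:Pring) * (l1)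 * (l3) * (g3) * (C α2) * (C γ) + (8:Pring) * (l1) * (l3) * (g3) * (C α1) * (C γ) + (-16:Pring) * (l1) * (l2) * (C γ)^3 + (-8:Pring) * (l1) * (l2) * (g2) * (C I)^2 * (C α2) * (C γ) + (8:Pring) * (l1) * (l2) * (g2) * (C I)^2 * (C α1) * (C γ) + (-32:Pring) * (l1) * (l2) * (l3) * (C γ)^2 + (-8:Pring) * (l1) * (l2) * (l3) * (g2) * (C I)^2 * (C α2) + (8:Pring) * (l1) * (l2) * (l3) * (g2) * (C I)^2 * (C α1) + (8:Pring) * (l1) * (l2) * (l3) * (g1) * (C I) * (C α2) + (8:Pring) * (l1) * (l2) * (l3) * (g1) * (C I) * (C α1) + (-16:Pring) * (l1) * (l2) * (l3)^2 * (C γ) + (4:Pring) * (l1) * (l2)^2 * (g3) * (C I)^2 * (C α2) + (-4:Pring) * (l1) * (l2)^2 * (g3) * (C I)^2 * (C α1) + (-8:Pring) * (l1) * (l2)^3 * (C I)^2 * (C γ) + (-8:Pring) * (l1) * (l2)^3 * (l3) * (C I)^2 + (8:Pring) * (l1)^2 * (g2) * (C I) * (C α2) * (C γ) + (8:Pring)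 * (l1)^2 * (g2) * (C I) * (C α1) * (C γ) + (4:Pring) * (l1)^2 * (g1) * (C α2) * (C γ) + (-4:Pring) * (l1)^2 * (g1) * (C α1) * (C γ) + (8:Pring) * (l1)^2 * (l3) * (g2) * (C I) * (C α2) + (8:Pring) * (l1)^2 * (l3) * (g2) * (C I) * (C α1) + (-8:Pring) * (l1)^2 * (l2) * (g3) * (C I) * (C α2) + (-8:Pring) * (l1)^2 * (l2) * (g3) * (C I) * (C α1) + (4:Pring) * (l1)^3 * (g3) * (C α2) + (-4:Pring) * (l1)^3 * (g3) * (C α1) + (8:Pring) * (l1)^3 * (l2) * (C γ) + (8:Pring) * (l1)^3 * (l2) * (l3)) * hI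
end
end

section
/- In A_η the quantum Kowalewski integrals commute: [J₁, J₄] = 0, where J₁ = l₁² + l₂² + 2l₃² − iα₁g₊ − iα₂g₋ and J₄ = (k₊k₋ + k₋k₊)/2 + 2η²(l₊l₋ + l₋l₊), with k₊ = l₊² + 2iα₂g₊ and k₋ = l₋² + 2iα₁g₋, for all α₁, α₂ ∈ ℂ. -/
/- Context: A_η is the quantized e(3): the unital associative ℂ-algebra with generators
l₁,l₂,l₃,g₁,g₂,g₃ and relations [l_i,l_j] = −iη ε_{ijk} l_k, [l_i,g_j] = −iη ε_{ijk} g_k,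
[g_i,g_j] = 0.  We formalize statements about A_η by quantifying over an arbitrary
ℂ-algebra B equipped with elements satisfying these relations (by the universal property
of the presented algebra this is equivalent to the statement in A_η itself). -/

set_option linter.unusedVariables false
set_option linter.unusedSectionVars false

noncomputable section
open Complex

/-- The Levi-Civita symbol on `Fin 3`. -/
def eps (i j k : Fin 3) : ℂ :=
  if (i, j, k) = (0, 1, 2) ∨ (i, j, k) = (1, 2, 0) ∨ (i, j, k) = (2, 0, 1) then 1
  else if (i, j, k) = (2, 1, 0) ∨ (i, j, k) = (0, 2, 1) ∨ (i, j, k) = (1, 0, 2) then -1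
  else 0

section Aux

variable {B : Type*} [Ring B] [Algebra ℂ B]

/-- Tail form of a swap rule with a commutator correction term. -/
lemma swap_tail {a b c : B} {s : ℂ} (h : a * b = b * a + s • c) (x : B) :
    a * (b * x) = b * (a * x) + s • (c * x) := by
  rw [← mul_assoc, h, add_mul, smul_mul_assoc, mul_assoc]

/-- Tail form of a swap rule for commuting elements. -/
lemma swap_tail0 {a b : B} (h : a * b = b * a) (x : B) :
    a * (b * x) = b * (a * x) := by
  rw [← mul_assoc, h, mul_assoc]

set_option maxHeartbeats 1000000000 in
/-- Key computation: the quantum Kowalewski integrals commute, stated with the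
pairwise commutation relations as explicit hypotheses. -/
lemma key (η α1 α2 : ℂ) (l0 l1 l2 g0 g1 g2 : B)
    (b10 : l1 * l0 = l0 * l1 + (Complex.I * η) • l2)
    (b20 : l2 * l0 = l0 * l2 + (-(Complex.I * η)) • l1)
    (b21 : l2 * l1 = l1 * l2 + (Complex.I * η) • l0)
    (c00 : g0 * l0 = l0 * g0)
    (c01 : g0 * l1 = l1 * g0 + (-(Complex.I * η)) • g2)
    (c02 : g0 * l2 = l2 * g0 + (Complex.I * η) • g1)
    (c10 : g1 * l0 = l0 * g1 + (Complex.I * η) • g2)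
    (c11 : g1 * l1 = l1 * g1)
    (c12 : g1 * l2 = l2 * g1 + (-(Complex.I * η)) • g0)
    (c20 : g2 * l0 = l0 * g2 + (-(Complex.I * η)) • g1)
    (c21 : g2 * l1 = l1 * g2 + (Complex.I * η) • g0)
    (c22 : g2 * l2 = l2 * g2)
    (d10 : g1 * g0 = g0 * g1)
    (d20 : g2 * g0 = g0 * g2)
    (d21 : g2 * g1 = g1 * g2) :
    (let lplus := l0 + Complex.I • l1
    let lminus := l0 - Complex.I • l1
    let gplus := g0 + Complex.I • g1
    let gminus := g0 - Complex.I • g1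
    let kplus := lplus ^ 2 + (2 * Complex.I * α2) • gplus
    let kminus := lminus ^ 2 + (2 * Complex.I * α1) • gminus
    let J1 := l0 ^ 2 + l1 ^ 2 + 2 • l2 ^ 2
      - (Complex.I * α1) • gplus - (Complex.I * α2) • gminus
    let J4 := (2⁻¹ : ℂ) • (kplus * kminus + kminus * kplus)
      + (2 * η ^ 2) • (lplus * lminus + lminus * lplus)
    J1 * J4 - J4 * J1) = 0 := by
  simp only [smul_add, smul_sub, smul_smul, pow_two, two_smul, mul_add, add_mul, mul_sub,
    sub_mul, smul_mul_assoc, mul_smul_comm, mul_assoc,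
    b10, b20, b21, c00, c01, c02, c10, c11, c12, c20, c21, c22, d10, d20, d21,
    swap_tail b10, swap_tail b20, swap_tail b21,
    swap_tail0 c00, swap_tail c01, swap_tail c02,
    swap_tail c10, swap_tail0 c11, swap_tail c12,
    swap_tail c20, swap_tail c21, swap_tail0 c22,
    swap_tail0 d10, swap_tail0 d20, swap_tail0 d21]
  have hI2 : Complex.I ^ (2:ℕ) = -1 := Complex.I_sq
  have hI3 : Complex.I ^ (3:ℕ) = -Complex.I := by
    rw [pow_succ, hI2, neg_one_mul]
  have hI4 : Complex.I ^ (4:ℕ) = 1 := by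
    rw [pow_succ, hI3, neg_mul, Complex.I_mul_I, neg_neg]
  have hI5 : Complex.I ^ (5:ℕ) = Complex.I := by
    rw [pow_succ, hI4, one_mul]
  have hI6 : Complex.I ^ (6:ℕ) = -1 := by
    rw [pow_succ, hI5, Complex.I_mul_I]
  have hI7 : Complex.I ^ (7:ℕ) = -Complex.I := by
    rw [pow_succ, hI6, neg_one_mul]
  have hI8 : Complex.I ^ (8:ℕ) = 1 := by
    rw [pow_succ, hI7, neg_mul, Complex.I_mul_I, neg_neg]
  have hI9 : Complex.I ^ (9:ℕ) = Complex.I := by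
    rw [pow_succ, hI8, one_mul]
  have hI10 : Complex.I ^ (10:ℕ) = -1 := by
    rw [pow_succ, hI9, Complex.I_mul_I]
  have hI11 : Complex.I ^ (11:ℕ) = -Complex.I := by
    rw [pow_succ, hI10, neg_one_mul]
  have hI12 : Complex.I ^ (12:ℕ) = 1 := by
    rw [pow_succ, hI11, neg_mul, Complex.I_mul_I, neg_neg]
  match_scalars <;>
    (ring_nf
     try simp only [hI2, hI3, hI4, hI5, hI6, hI7, hI8, hI9, hI10, hI11, hI12, neg_neg, neg_mul, mul_neg, one_mul, mul_one, neg_one_mul]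
     try ring1)

end Aux

/-- in `A_η` the quantum Kowalewski integrals commute: `[J₁, J₄] = 0`,
where `J₁ = l₁² + l₂² + 2l₃² − iα₁g₊ − iα₂g₋` and
`J₄ = (k₊k₋ + k₋k₊)/2 + 2η²(l₊l₋ + l₋l₊)`, with `k₊ = l₊² + 2iα₂g₊`,
`k₋ = l₋² + 2iα₁g₋`, for all `α₁, α₂ ∈ ℂ`. -/
theorem statement17 (η α1 α2 : ℂ) (B : Type*) [Ring B] [Algebra ℂ B]
    (l g : Fin 3 → B)
    (hll : ∀ i j, l i * l j - l j * l i = (-Complex.I * η) • ∑ k, eps i j k • l k)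
    (hlg : ∀ i j, l i * g j - g j * l i = (-Complex.I * η) • ∑ k, eps i j k • g k)
    (hgg : ∀ i j, g i * g j = g j * g i) :
    let lplus := l 0 + Complex.I • l 1
    let lminus := l 0 - Complex.I • l 1
    let gplus := g 0 + Complex.I • g 1
    let gminus := g 0 - Complex.I • g 1
    let kplus := lplus ^ 2 + (2 * Complex.I * α2) • gplus
    let kminus := lminus ^ 2 + (2 * Complex.I * α1) • gminus
    let J1 := l 0 ^ 2 + l 1 ^ 2 + 2 • l 2 ^ 2
      - (Complex.I * α1) • gplus - (Complex.I * α2) • gminus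
    let J4 := (2⁻¹ : ℂ) • (kplus * kminus + kminus * kplus)
      + (2 * η ^ 2) • (lplus * lminus + lminus * lplus)
    J1 * J4 - J4 * J1 = 0 := by
  have b10 : l 1 * l 0 = l 0 * l 1 + (Complex.I * η) • l 2 := by
    have h := hll 0 1
    simp [eps, Fin.sum_univ_three] at h
    linear_combination (norm := module) -h
  have b20 : l 2 * l 0 = l 0 * l 2 + (-(Complex.I * η)) • l 1 := by
    have h := hll 0 2
    simp [eps, Fin.sum_univ_three] at h
    linear_combination (norm := module) -h
  have b21 : l 2 * l 1 = l 1 * l 2 + (Complex.I * η) • l 0 := by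
    have h := hll 1 2
    simp [eps, Fin.sum_univ_three] at h
    linear_combination (norm := module) -h
  have c00 : g 0 * l 0 = l 0 * g 0 := by
    have h := hlg 0 0
    simp [eps, Fin.sum_univ_three] at h
    linear_combination (norm := module) -h
  have c01 : g 0 * l 1 = l 1 * g 0 + (-(Complex.I * η)) • g 2 := by
    have h := hlg 1 0
    simp [eps, Fin.sum_univ_three] at h
    linear_combination (norm := module) -h
  have c02 : g 0 * l 2 = l 2 * g 0 + (Complex.I * η) • g 1 := by
    have h := hlg 2 0
    simp [eps, Fin.sum_univ_three] at h
    linear_combination (norm := module) -h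
  have c10 : g 1 * l 0 = l 0 * g 1 + (Complex.I * η) • g 2 := by
    have h := hlg 0 1
    simp [eps, Fin.sum_univ_three] at h
    linear_combination (norm := module) -h
  have c11 : g 1 * l 1 = l 1 * g 1 := by
    have h := hlg 1 1
    simp [eps, Fin.sum_univ_three] at h
    linear_combination (norm := module) -h
  have c12 : g 1 * l 2 = l 2 * g 1 + (-(Complex.I * η)) • g 0 := by
    have h := hlg 2 1
    simp [eps, Fin.sum_univ_three] at h
    linear_combination (norm := module) -h
  have c20 : g 2 * l 0 = l 0 * g 2 + (-(Complex.I * η)) • g 1 := by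
    have h := hlg 0 2
    simp [eps, Fin.sum_univ_three] at h
    linear_combination (norm := module) -h
  have c21 : g 2 * l 1 = l 1 * g 2 + (Complex.I * η) • g 0 := by
    have h := hlg 1 2
    simp [eps, Fin.sum_univ_three] at h
    linear_combination (norm := module) -h
  have c22 : g 2 * l 2 = l 2 * g 2 := by
    have h := hlg 2 2
    simp [eps, Fin.sum_univ_three] at h
    linear_combination (norm := module) -h
  intro lplus lminus gplus gminus kplus kminus J1 J4
  exact key η α1 α2 (l 0) (l 1) (l 2) (g 0) (g 1) (g 2)
    b10 b20 b21 c00 c01 c02 c10 c11 c12 c20 c21 c22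
    (hgg 1 0) (hgg 2 0) (hgg 2 1)
end
end
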